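/- arXiv:1710.00980 — 4 statements merged into one kernel-verified Lean document; each statement's English description precedes it below -/
import Mathlib

section
/- Let n, n_t be positive integers, let g_1, …, g_n ≥ 0 be nonnegative reals, and let A ≥ 0. Then the objective function of the sum-rate maximization problem, R(W_s, P_s, W_m, P_m) = W_s·Σ_{i=1}^{n} log(1 + P_s·g_i/(W_s·n_t)) + W_m·log(1 + P_m·A/W_m), is concave on the convex set {(W_s, P_s, W_m, P_m) ∈ ℝ⁴ : W_s > 0, W_m > 0, P_s ≥ 0, P_m ≥ 0}. -/
/-!
Every summand of the objective has the form `W * log (1 + P * c / W)` with `c ≥ 0`, the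
perspective `(W, P) ↦ W * φ (P / W)` of the concave function `φ x = log (1 + c * x)`.
Perspectives of concave functions are concave: for weights `a, b` and `T = a W₁ + b W₂`, the
ratio `(a P₁ + b P₂) / T` is the convex combination of `P₁ / W₁` and `P₂ / W₂` with weights
`a W₁ / T` and `b W₂ / T`, so concavity of `φ` multiplied by `T` gives the claim.
The objective is a sum of such perspectives composed with coordinate projections.
-/

open Real Set

section Concave

variable {𝕜 E F β ι : Type*} [Semiring 𝕜] [PartialOrder 𝕜]
  [AddCommMonoid E] [AddCommMonoid F] [AddCommMonoid β] [PartialOrder β] [IsOrderedAddMonoid β]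

theorem Convex.concaveOn_sum [SMul 𝕜 E] [Module 𝕜 β] {s : Set E} (hs : Convex 𝕜 s)
    (t : Finset ι) {f : ι → E → β} (hf : ∀ i ∈ t, ConcaveOn 𝕜 s (f i)) :
    ConcaveOn 𝕜 s (∑ i ∈ t, f i) :=
  Finset.sum_induction f (ConcaveOn 𝕜 s) (fun _ _ => ConcaveOn.add) (concaveOn_const (0 : β) hs) hf

theorem ConcaveOn.add_prod [Module 𝕜 E] [Module 𝕜 F] [Module 𝕜 β] {s : Set E} {t : Set F}
    {f : E → β} {g : F → β} (hf : ConcaveOn 𝕜 s f) (hg : ConcaveOn 𝕜 t g) :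
    ConcaveOn 𝕜 (s ×ˢ t) (fun p => f p.1 + g p.2) :=
  ((hf.comp_linearMap (LinearMap.fst 𝕜 E F)).subset (fun _ hp => hp.1) (hf.1.prod hg.1)).add
    ((hg.comp_linearMap (LinearMap.snd 𝕜 E F)).subset (fun _ hp => hp.2) (hf.1.prod hg.1))

end Concave

section Perspective

variable {𝕜 E : Type*} [Field 𝕜] [LinearOrder 𝕜] [IsStrictOrderedRing 𝕜]
  [AddCommGroup E] [Module 𝕜 E]

theorem ConcaveOn.perspective {s : Set E} {f : E → 𝕜} (hf : ConcaveOn 𝕜 s f) :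
    ConcaveOn 𝕜 {p : 𝕜 × E | 0 < p.1 ∧ p.1⁻¹ • p.2 ∈ s} (fun p => p.1 * f (p.1⁻¹ • p.2)) := by
  refine concaveOn_of_convex_hypograph ?_
  rintro ⟨⟨t₁, x₁⟩, r₁⟩ ⟨⟨ht₁, hx₁⟩, hr₁⟩ ⟨⟨t₂, x₂⟩, r₂⟩ ⟨⟨ht₂, hx₂⟩, hr₂⟩ a b ha hb hab
  rcases ha.eq_or_lt with rfl | ha
  · simp_all
  rcases hb.eq_or_lt with rfl | hb
  · simp_all
  set T := a * t₁ + b * t₂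
  have hT : 0 < T := by positivity
  have hμ : 0 ≤ a * t₁ / T := by positivity
  have hν : 0 ≤ b * t₂ / T := by positivity
  have hμν : a * t₁ / T + b * t₂ / T = 1 := by rw [← add_div, div_self hT.ne']
  have hcombo : T⁻¹ • (a • x₁ + b • x₂) = (a * t₁ / T) • t₁⁻¹ • x₁ + (b * t₂ / T) • t₂⁻¹ • x₂ := by
    simp only [smul_add, smul_smul]
    congr 2 <;> field_simp
  show (0 < T ∧ T⁻¹ • (a • x₁ + b • x₂) ∈ s) ∧ a * r₁ + b * r₂ ≤ T * f (T⁻¹ • (a • x₁ + b • x₂))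
  rw [hcombo]
  refine ⟨⟨hT, hf.1 hx₁ hx₂ hμ hν hμν⟩, ?_⟩
  calc a * r₁ + b * r₂ ≤ a * (t₁ * f (t₁⁻¹ • x₁)) + b * (t₂ * f (t₂⁻¹ • x₂)) := by gcongr
    _ = T * (a * t₁ / T * f (t₁⁻¹ • x₁) + b * t₂ / T * f (t₂⁻¹ • x₂)) := by field_simp
    _ ≤ T * f ((a * t₁ / T) • t₁⁻¹ • x₁ + (b * t₂ / T) • t₂⁻¹ • x₂) := by
      gcongr
      exact hf.2 hx₁ hx₂ hμ hν hμν

end Perspective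

theorem concaveOn_log_one_add_mul {c : ℝ} (hc : 0 ≤ c) :
    ConcaveOn ℝ (Ici 0) (fun x => log (1 + c * x)) := by
  refine ⟨convex_Ici 0, fun x (hx : 0 ≤ x) y (hy : 0 ≤ y) a b ha hb hab => ?_⟩
  have h := strictConcaveOn_log_Ioi.concaveOn.2 (mem_Ioi.2 (by positivity : 0 < 1 + c * x))
    (mem_Ioi.2 (by positivity : 0 < 1 + c * y)) ha hb hab
  convert h using 2
  simp only [smul_eq_mul]
  linear_combination -hab

theorem concaveOn_mul_log_one_add_div {c : ℝ} (hc : 0 ≤ c) :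
    ConcaveOn ℝ {p : ℝ × ℝ | 0 < p.1 ∧ 0 ≤ p.2} (fun p => p.1 * log (1 + p.2 * c / p.1)) := by
  have hset : {p : ℝ × ℝ | 0 < p.1 ∧ 0 ≤ p.2} = {p | 0 < p.1 ∧ p.1⁻¹ • p.2 ∈ Ici 0} := by
    ext ⟨t, x⟩
    simp only [mem_ofPred_eq, mem_Ici, smul_eq_mul]
    exact and_congr_right fun ht => (mul_nonneg_iff_of_pos_left (inv_pos.2 ht)).symm
  have hfun : (fun p : ℝ × ℝ => p.1 * log (1 + p.2 * c / p.1)) =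
      fun p => p.1 * log (1 + c * (p.1⁻¹ • p.2)) := by
    ext ⟨t, x⟩
    simp only [smul_eq_mul]
    ring_nf
  rw [hset, hfun]
  exact (concaveOn_log_one_add_mul hc).perspective

theorem stmt_7_general (n nt : ℕ)
    (g : Fin n → ℝ) (hg : ∀ i, 0 ≤ g i) (A : ℝ) (hA : 0 ≤ A) :
    ConcaveOn ℝ
      {p : (ℝ × ℝ) × ℝ × ℝ | 0 < p.1.1 ∧ 0 ≤ p.1.2 ∧ 0 < p.2.1 ∧ 0 ≤ p.2.2}
      (fun p : (ℝ × ℝ) × ℝ × ℝ =>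
        p.1.1 * ∑ i, Real.log (1 + p.1.2 * g i / (p.1.1 * (nt : ℝ))) +
          p.2.1 * Real.log (1 + p.2.2 * A / p.2.1)) := by
  set C := {q : ℝ × ℝ | 0 < q.1 ∧ 0 ≤ q.2}
  have hband : ConcaveOn ℝ C (fun q => q.1 * ∑ i, log (1 + q.2 * g i / (q.1 * nt))) := by
    refine ((convex_Ioi 0).prod (convex_Ici 0)).concaveOn_sum Finset.univ
      (fun i _ => concaveOn_mul_log_one_add_div (div_nonneg (hg i) (Nat.cast_nonneg nt)))
      |>.congr fun q _ => ?_
    rw [Finset.sum_apply, Finset.mul_sum]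
    refine Finset.sum_congr rfl fun i _ => ?_
    ring_nf
  have hS : {p : (ℝ × ℝ) × ℝ × ℝ | 0 < p.1.1 ∧ 0 ≤ p.1.2 ∧ 0 < p.2.1 ∧ 0 ≤ p.2.2} = C ×ˢ C := by
    ext p
    simp only [C, mem_prod, mem_ofPred_eq, and_assoc]
  rw [hS]
  exact hband.add_prod (concaveOn_mul_log_one_add_div hA)

/-- The sum-rate objective
`R(W_s, P_s, W_m, P_m) = W_s·Σᵢ log(1 + P_s·gᵢ/(W_s·n_t)) + W_m·log(1 + P_m·A/W_m)`
is concave on `{W_s > 0, P_s ≥ 0, W_m > 0, P_m ≥ 0}`.  The tuple is encoded as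
`((W_s, P_s), (W_m, P_m)) : (ℝ × ℝ) × (ℝ × ℝ)`. -/
theorem stmt_7 (n nt : ℕ) (hn : 0 < n) (hnt : 0 < nt)
    (g : Fin n → ℝ) (hg : ∀ i, 0 ≤ g i) (A : ℝ) (hA : 0 ≤ A) :
    ConcaveOn ℝ
      {p : (ℝ × ℝ) × ℝ × ℝ | 0 < p.1.1 ∧ 0 ≤ p.1.2 ∧ 0 < p.2.1 ∧ 0 ≤ p.2.2}
      (fun p : (ℝ × ℝ) × ℝ × ℝ =>
        p.1.1 * ∑ i, Real.log (1 + p.1.2 * g i / (p.1.1 * (nt : ℝ))) +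
          p.2.1 * Real.log (1 + p.2.2 * A / p.2.1)) :=
  stmt_7_general n nt g hg A hA
end

section
/- Let n, n_t, n_r be positive integers, a > 0, A > 0, P_max > 0, W_s^max > 0, W_m^max > 0, and let g_1, …, g_n ≥ 0. Define R(W_s, P_s, W_m, P_m) = W_s·Σ_{i=1}^{n} log(1 + P_s·g_i/(W_s·n_t)) + W_m·log(1 + P_m·A/W_m), and let F be the feasible set of tuples (W_s, P_s, W_m, P_m) with 0 < W_s ≤ W_s^max, 0 < W_m ≤ W_m^max, P_s ≥ 0, P_m ≥ 0, and P_s + n_r·a·W_s + P_m + a·W_m ≤ P_max. Then every point of F at which R attains its maximum over F satisfies the power constraint with equality: P_s + n_r·a·W_s + P_m + a·W_m = P_max. -/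
/-- **The power constraint is active at any sum-rate optimum.**  With the sum rate
`R((W_s, P_s), (W_m, P_m)) = W_s·Σᵢ log(1 + P_s·gᵢ/(W_s·n_t)) + W_m·log(1 + P_m·A/W_m)`
and feasible set `0 < W_s ≤ W_s^max`, `0 < W_m ≤ W_m^max`, `P_s, P_m ≥ 0`,
`P_s + n_r·a·W_s + P_m + a·W_m ≤ P_max`, every maximizer of `R` over the feasible set
satisfies `P_s + n_r·a·W_s + P_m + a·W_m = P_max`. -/
theorem stmt_9 (n nt nr : ℕ) (hn : 0 < n) (hnt : 0 < nt) (hnr : 0 < nr)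
    (a A Pmax Wsmax Wmmax : ℝ) (ha : 0 < a) (hA : 0 < A) (hPmax : 0 < Pmax)
    (hWsmax : 0 < Wsmax) (hWmmax : 0 < Wmmax)
    (g : Fin n → ℝ) (hg : ∀ i, 0 ≤ g i)
    (R : (ℝ × ℝ) × ℝ × ℝ → ℝ)
    (hR : R = fun p : (ℝ × ℝ) × ℝ × ℝ =>
      p.1.1 * ∑ i, Real.log (1 + p.1.2 * g i / (p.1.1 * (nt : ℝ))) +
        p.2.1 * Real.log (1 + p.2.2 * A / p.2.1))
    (F : Set ((ℝ × ℝ) × ℝ × ℝ))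
    (hF : F = {p : (ℝ × ℝ) × ℝ × ℝ |
      (0 < p.1.1 ∧ p.1.1 ≤ Wsmax) ∧ (0 < p.2.1 ∧ p.2.1 ≤ Wmmax) ∧
      0 ≤ p.1.2 ∧ 0 ≤ p.2.2 ∧
      p.1.2 + (nr : ℝ) * a * p.1.1 + p.2.2 + a * p.2.1 ≤ Pmax}) :
    ∀ x ∈ F, (∀ y ∈ F, R y ≤ R x) →
      x.1.2 + (nr : ℝ) * a * x.1.1 + x.2.2 + a * x.2.1 = Pmax := by
  subst hR hF
  rintro ⟨⟨Ws, Ps⟩, Wm, Pm⟩ hx hmax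
  obtain ⟨⟨hWs, hWs'⟩, ⟨hWm, hWm'⟩, hPs, hPm, hle⟩ := hx
  simp only at *
  by_contra hne
  have hlt : Ps + (nr : ℝ) * a * Ws + Pm + a * Wm < Pmax := lt_of_le_of_ne hle hne
  set ε := Pmax - (Ps + (nr : ℝ) * a * Ws + Pm + a * Wm) with hε
  have hεpos : 0 < ε := by simp [hε]; linarith
  have hy : (((Ws, Ps), Wm, Pm + ε) : (ℝ × ℝ) × ℝ × ℝ) ∈
      {p : (ℝ × ℝ) × ℝ × ℝ |
      (0 < p.1.1 ∧ p.1.1 ≤ Wsmax) ∧ (0 < p.2.1 ∧ p.2.1 ≤ Wmmax) ∧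
      0 ≤ p.1.2 ∧ 0 ≤ p.2.2 ∧
      p.1.2 + (nr : ℝ) * a * p.1.1 + p.2.2 + a * p.2.1 ≤ Pmax} := by
    refine ⟨⟨hWs, hWs'⟩, ⟨hWm, hWm'⟩, hPs, by simp only; linarith, by simp only; linarith⟩
  have := hmax _ hy
  simp only at this
  have hlog : Real.log (1 + Pm * A / Wm) < Real.log (1 + (Pm + ε) * A / Wm) := by
    apply Real.log_lt_log
    · have : 0 ≤ Pm * A / Wm := by positivity
      linarith
    · have : Pm * A / Wm < (Pm + ε) * A / Wm := by
        rw [div_lt_div_iff₀ hWm hWm]; nlinarith [mul_pos (mul_pos hεpos hA) hWm]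
      linarith
  nlinarith [hlog]
end

section
/- Let A > 0, W_s > 0, P_max > 0, let n ≥ 1 and n_r ≥ 1 be reals, and let B : (0,∞) → ℝ be the function assigning to each a > 0 the unique B(a) > 0 with B(a) + log B(a) = log(a·A) − 1. Define C(a) = n_r·a·(1 + n/B(a)) and W_m^*(a) = (P_max − C(a)·W_s)·B(a)/(a·(B(a) + 1)). Then W_m^* is strictly decreasing on the set {a > 0 : P_max − C(a)·W_s ≥ 0}; i.e., the optimal mmWave bandwidth decreases as the ADC power-consumption coefficient a increases. -/
/-! Writing `b = B(a)`, the defining equation says `a·A = b·e^(b+1)`, so `b` is strictly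
increasing in `a` and the constraint-weighted quantity `(P_max − C(a)·W_s)·b/a` equals
`P_max·A·e^(−(b+1)) − W_s·n_r·(b + n)`, which is strictly decreasing in `b`.
So `W_m^*` is this numerator, nonnegative on the feasible set, over the increasing `b + 1`. -/

open Real

lemma eq_mul_exp_of_add_log_eq {b x : ℝ} (hb : 0 < b) (hx : 0 < x)
    (h : b + log b = log x - 1) : x = b * exp (b + 1) := by
  calc x = exp (log x) := (exp_log hx).symm
    _ = exp (b + 1) * exp (log b) := by rw [← exp_add]; congr 1; linarith
    _ = b * exp (b + 1) := by rw [exp_log hb, mul_comm]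

lemma lt_of_add_log_eq_of_lt {b₁ b₂ x₁ x₂ : ℝ} (hb₂ : 0 < b₂) (hx₁ : 0 < x₁) (hx : x₁ < x₂)
    (h₁ : b₁ + log b₁ = log x₁ - 1) (h₂ : b₂ + log b₂ = log x₂ - 1) : b₁ < b₂ := by
  by_contra! hle
  have : log b₂ ≤ log b₁ := log_le_log hb₂ hle
  have : log x₁ < log x₂ := log_lt_log hx₁ hx
  linarith

lemma sub_mul_add_mul_div_eq {P A Q m n a b : ℝ} (ha : 0 < a) (hb : 0 < b)
    (hab : a * A = b * exp (b + 1)) :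
    (P - m * a * (1 + n / b) * Q) * b / a = P * A / exp (b + 1) - Q * m * (b + n) := by
  have hE : exp (b + 1) ≠ 0 := (exp_pos _).ne'
  field_simp
  linear_combination -P * hab

lemma div_exp_sub_mul_lt {K Q n b₁ b₂ : ℝ} (hK : 0 < K) (hQ : 0 ≤ Q) (hb : b₁ < b₂) :
    K / exp (b₂ + 1) - Q * (b₂ + n) < K / exp (b₁ + 1) - Q * (b₁ + n) := by
  have : K / exp (b₂ + 1) < K / exp (b₁ + 1) :=
    div_lt_div_of_pos_left hK (exp_pos _) (exp_lt_exp.2 (by linarith))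
  have : Q * (b₁ + n) ≤ Q * (b₂ + n) := by gcongr
  linarith

theorem stmt_12_general (A Ws Pmax n nr : ℝ) (hA : 0 < A) (hWs : 0 < Ws) (hPmax : 0 < Pmax)
    (hnr : 1 ≤ nr)
    (B : ℝ → ℝ)
    (hB : ∀ a : ℝ, 0 < a → 0 < B a ∧ B a + Real.log (B a) = Real.log (a * A) - 1)
    (C Wm : ℝ → ℝ)
    (hC : C = fun a => nr * a * (1 + n / B a))
    (hWm : Wm = fun a => (Pmax - C a * Ws) * B a / (a * (B a + 1))) :
    StrictAntiOn Wm {a : ℝ | 0 < a ∧ 0 ≤ Pmax - C a * Ws} := by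
  subst hC hWm
  set N : ℝ → ℝ := fun a => (Pmax - nr * a * (1 + n / B a) * Ws) * B a / a
  have hWm_eq : ∀ a, (Pmax - nr * a * (1 + n / B a) * Ws) * B a / (a * (B a + 1))
      = N a / (B a + 1) := fun a => by simp only [N, div_div]
  have hN : ∀ a, 0 < a → N a = Pmax * A / exp (B a + 1) - Ws * nr * (B a + n) := fun a ha =>
    sub_mul_add_mul_div_eq ha (hB a ha).1
      (eq_mul_exp_of_add_log_eq (hB a ha).1 (by positivity) (hB a ha).2)
  rintro a₁ ⟨ha₁, -⟩ a₂ ⟨ha₂, hfeas₂⟩ ha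
  have hBlt : B a₁ < B a₂ := lt_of_add_log_eq_of_lt (hB a₂ ha₂).1 (by positivity)
    (by gcongr) (hB a₁ ha₁).2 (hB a₂ ha₂).2
  have hN₂ : 0 ≤ N a₂ := div_nonneg (mul_nonneg hfeas₂ (hB a₂ ha₂).1.le) ha₂.le
  have hNlt : N a₂ < N a₁ := by
    rw [hN a₁ ha₁, hN a₂ ha₂]
    exact div_exp_sub_mul_lt (by positivity) (by positivity) hBlt
  simp only [hWm_eq]
  exact div_lt_div₀ hNlt (by linarith) (hN₂.trans hNlt.le) (by linarith [(hB a₁ ha₁).1])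

/-- **The optimal mmWave bandwidth decreases in the ADC power coefficient `a`.**
With `B(a)` the unique positive solution of `B + log B = log(a·A) − 1` (the Wright
omega value `ω(log(aA) − 1)`), `C(a) = n_r·a·(1 + n/B(a))` and
`W_m^*(a) = (P_max − C(a)·W_s)·B(a)/(a·(B(a) + 1))`, the map `a ↦ W_m^*(a)` is strictly
decreasing on `{a > 0 : P_max − C(a)·W_s ≥ 0}`. -/
theorem stmt_12 (A Ws Pmax n nr : ℝ) (hA : 0 < A) (hWs : 0 < Ws) (hPmax : 0 < Pmax)
    (hn : 1 ≤ n) (hnr : 1 ≤ nr)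
    (B : ℝ → ℝ)
    (hB : ∀ a : ℝ, 0 < a → 0 < B a ∧ B a + Real.log (B a) = Real.log (a * A) - 1)
    (C Wm : ℝ → ℝ)
    (hC : C = fun a => nr * a * (1 + n / B a))
    (hWm : Wm = fun a => (Pmax - C a * Ws) * B a / (a * (B a + 1))) :
    StrictAntiOn Wm {a : ℝ | 0 < a ∧ 0 ≤ Pmax - C a * Ws} :=
  stmt_12_general A Ws Pmax n nr hA hWs hPmax hnr B hB C Wm hC hWm
end

section
/- Let S be a nonempty set, let f : S → ℝ and g : S → ℝ with g(x) > 0 for all x ∈ S, and suppose x* ∈ S attains the maximum of f/g over S. Let β* = f(x*)/g(x*) and suppose the set {f(x) − β*·g(x) : x ∈ S} is bounded above. Then F(β*) = sup_{x ∈ S} (f(x) − β*·g(x)) = 0; i.e., the optimal value of the fractional program is the root of the Dinkelbach function F. -/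
noncomputable def dinkelbach {α : Type*} (f g : α → ℝ) (β : ℝ) : ℝ :=
  ⨆ x, (f x - β * g x)

section Dinkelbach

variable {α : Type*} (f g : α → ℝ)

theorem dinkelbach_nonpos_of_ratio_le {β : ℝ} (hg : ∀ x, 0 < g x) (h : ∀ x, f x / g x ≤ β) :
    dinkelbach f g β ≤ 0 :=
  Real.iSup_nonpos fun x => sub_nonpos.mpr ((div_le_iff₀ (hg x)).mp (h x))

theorem dinkelbach_ratio_nonneg {x : α} (hgx : g x ≠ 0)
    (hbdd : BddAbove (Set.range fun y => f y - f x / g x * g y)) :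
    0 ≤ dinkelbach f g (f x / g x) :=
  calc (0 : ℝ) = f x - f x / g x * g x := by rw [div_mul_cancel₀ _ hgx, sub_self]
    _ ≤ dinkelbach f g (f x / g x) := le_ciSup hbdd x

end Dinkelbach

theorem stmt_14_general {α : Type*} (f g : α → ℝ) (hg : ∀ x, 0 < g x)
    (xs : α) (hmax : ∀ x, f x / g x ≤ f xs / g xs)
    (βs : ℝ) (hβs : βs = f xs / g xs)
    (hbdd : BddAbove (Set.range fun x => f x - βs * g x)) :
    (⨆ x, (f x - βs * g x)) = 0 := by
  subst hβs
  exact le_antisymm (dinkelbach_nonpos_of_ratio_le f g hg hmax)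
    (dinkelbach_ratio_nonneg f g (hg xs).ne' hbdd)

/-- **The optimal ratio is the root of the Dinkelbach function:** if `x*` maximizes
`f/g` over `S`, `β* = f(x*)/g(x*)`, and `{f(x) − β*·g(x) : x ∈ S}` is bounded above,
then `F(β*) = sup_{x ∈ S} (f(x) − β*·g(x)) = 0`. -/
theorem stmt_14 {α : Type*} [Nonempty α] (f g : α → ℝ) (hg : ∀ x, 0 < g x)
    (xs : α) (hmax : ∀ x, f x / g x ≤ f xs / g xs)
    (βs : ℝ) (hβs : βs = f xs / g xs)
    (hbdd : BddAbove (Set.range fun x => f x - βs * g x)) :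
    (⨆ x, (f x - βs * g x)) = 0 :=
  stmt_14_general f g hg xs hmax βs hβs hbdd
end
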